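/- Let Π be a profinite group whose set of open normal subgroups is countably infinite (i.e., Π has countably infinite rank). Then the following are equivalent: (i) every non-trivial finite split embedding problem for Π has exactly countably infinitely many proper solutions (i.e., Π is quasi-free of rank ℵ₀); (ii) every finite split embedding problem for Π has a proper solution. -/

import Mathlib

/-!
A continuous homomorphism from `Π` onto a finite discrete group is determined, up to finitely many
choices, by its kernel, which is an open normal subgroup; so countable rank bounds every set of
proper solutions by `ℵ₀`. Conversely, if split embedding problems are solvable, solve the one
given by the fibre power `Γ ×_G ⋯ ×_G Γ` (`n` factors) over `G`, which still splits along the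
diagonal. Its coordinates are `n` proper solutions of `(α, f)`, pairwise distinct because a proper
solution is onto the fibre power and so hits `(k, 1, …, 1)` for some `1 ≠ k ∈ ker f`.
-/

open Cardinal

universe u

/-- Continuity of a map into a set carrying the discrete topology. -/
def ContinuousToDiscrete {A B : Type*} [TopologicalSpace A] (f : A → B) : Prop :=
  ∀ s : Set B, IsOpen (f ⁻¹' s)

theorem ContinuousToDiscrete.comp {A B C : Type*} [TopologicalSpace A] {f : A → B} (g : B → C)
    (hf : ContinuousToDiscrete f) : ContinuousToDiscrete (g ∘ f) :=
  fun s => hf (g ⁻¹' s)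

theorem ContinuousToDiscrete.isOpen_ker {P Γ : Type*} [Group P] [TopologicalSpace P] [Group Γ]
    {l : P →* Γ} (hl : ContinuousToDiscrete l) : IsOpen (l.ker : Set P) :=
  hl {1}

theorem MonoidHom.finite_setOf_ker_eq {P Γ : Type*} [Group P] [Group Γ] [Finite Γ]
    (K : Subgroup P) : {l : P →* Γ | l.ker = K}.Finite := by
  rcases Set.eq_empty_or_nonempty {l : P →* Γ | l.ker = K} with h | ⟨l₀, rfl⟩
  · simp [h]
  have : Finite (P ⧸ l₀.ker) := (QuotientGroup.quotientKerEquivRange l₀).finite_iff.mpr inferInstance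
  rw [← Set.finite_coe_iff]
  refine Finite.of_injective
    (fun l : {l : P →* Γ | l.ker = l₀.ker} => ⇑(QuotientGroup.lift l₀.ker l.1 l.2.ge)) ?_
  intro l₁ l₂ h
  ext x
  exact congrFun h (x : P ⧸ l₀.ker)

theorem countable_continuousToDiscrete_monoidHom {P Γ : Type*} [Group P] [TopologicalSpace P]
    [Group Γ] [Finite Γ] (hP : Countable {H : Subgroup P // IsOpen (H : Set P) ∧ H.Normal}) :
    Countable {l : P →* Γ // ContinuousToDiscrete l} := by
  have hcover : {l : P →* Γ | ContinuousToDiscrete l} ⊆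
      ⋃ N : {H : Subgroup P // IsOpen (H : Set P) ∧ H.Normal}, {l : P →* Γ | l.ker = N.1} :=
    fun l hl => Set.mem_iUnion.mpr ⟨⟨l.ker, hl.isOpen_ker, l.normal_ker⟩, rfl⟩
  exact (Set.Countable.mono hcover (Set.countable_iUnion fun N =>
    (MonoidHom.finite_setOf_ker_eq N.1).countable)).to_subtype

section EmbeddingProblem

variable {P G Γ : Type*} [Group P] [TopologicalSpace P] [Group G] [Group Γ]

def IsProperSolution (α : P →* G) (f : Γ →* G) (l : P →* Γ) : Prop :=
  ContinuousToDiscrete l ∧ Function.Surjective l ∧ f.comp l = α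

theorem exists_isProperSolution_of_ker_eq_bot {α : P →* G} {f : Γ →* G}
    (hα : ContinuousToDiscrete α) (hαs : Function.Surjective α) (hfs : Function.Surjective f)
    (hker : f.ker = ⊥) : ∃ l, IsProperSolution α f l := by
  let e := MulEquiv.ofBijective f ⟨(MonoidHom.ker_eq_bot_iff f).mp hker, hfs⟩
  refine ⟨e.symm.toMonoidHom.comp α, hα.comp e.symm, e.symm.surjective.comp hαs, ?_⟩
  ext x
  exact e.apply_symm_apply (α x)

theorem mk_properSolutions_le_aleph0 [Finite Γ]
    (hP : Countable {H : Subgroup P // IsOpen (H : Set P) ∧ H.Normal}) (α : P →* G)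
    (f : Γ →* G) : #{l // IsProperSolution α f l} ≤ ℵ₀ :=
  (mk_subtype_mono fun _ hl => hl.1).trans
    (mk_le_aleph0_iff.mpr (countable_continuousToDiscrete_monoidHom hP))

end EmbeddingProblem

section FiberPower

variable {G Γ : Type*} [Group G] [Group Γ] (f : Γ →* G) (ι : Type*)

def fiberPower : Subgroup (ι → Γ) where
  carrier := {γ | ∀ i j, f (γ i) = f (γ j)}
  one_mem' := by simp
  mul_mem' ha hb i j := by simp only [Pi.mul_apply, map_mul, ha i j, hb i j]
  inv_mem' ha i j := by simp only [Pi.inv_apply, map_inv, ha i j]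

namespace fiberPower

def proj (i : ι) : fiberPower f ι →* Γ :=
  (Pi.evalMonoidHom (fun _ => Γ) i).comp (fiberPower f ι).subtype

def diag : Γ →* fiberPower f ι :=
  (Pi.constMonoidHom ι Γ).codRestrict _ fun _ _ _ => rfl

variable {f ι}

theorem proj_comp_diag (i : ι) : (proj f ι i).comp (diag f ι) = MonoidHom.id Γ := rfl

theorem proj_surjective (i : ι) : Function.Surjective (proj f ι i) :=
  fun γ => ⟨diag f ι γ, rfl⟩

theorem comp_proj_eq (i j : ι) : f.comp (proj f ι i) = f.comp (proj f ι j) :=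
  MonoidHom.ext fun γ => γ.2 i j

theorem proj_injective (hker : f.ker ≠ ⊥) : Function.Injective (proj f ι) := by
  classical
  intro i j hij
  by_contra hne
  obtain ⟨k, hk, hk1⟩ := f.ker.bot_or_exists_ne_one.resolve_left hker
  have hmem : (Pi.mulSingle i k : ι → Γ) ∈ fiberPower f ι := by
    have hf : ∀ m, f ((Pi.mulSingle i k : ι → Γ) m) = 1 := fun m => by
      by_cases hm : m = i
      · subst hm; simpa using hk
      · simp [Pi.mulSingle_eq_of_ne hm]
    intro a b
    rw [hf a, hf b]
  have := DFunLike.congr_fun hij ⟨_, hmem⟩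
  simp [proj, Pi.mulSingle_eq_of_ne (Ne.symm hne), hk1] at this

theorem comp_proj_surjective (hfs : Function.Surjective f) (i : ι) :
    Function.Surjective (f.comp (proj f ι i)) :=
  hfs.comp (proj_surjective i)

theorem comp_proj_comp_diag_comp {s : G →* Γ} (hs : f.comp s = MonoidHom.id G) (i : ι) :
    (f.comp (proj f ι i)).comp ((diag f ι).comp s) = MonoidHom.id G := by
  rw [MonoidHom.comp_assoc, ← MonoidHom.comp_assoc _ (diag f ι), proj_comp_diag,
    MonoidHom.id_comp, hs]

end fiberPower

end FiberPower

section ProperSolutionsOfFiberPower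

open fiberPower

variable {P G Γ : Type*} [Group P] [TopologicalSpace P] [Group G] [Group Γ]
  {α : P →* G} {f : Γ →* G} {ι : Type*}

theorem IsProperSolution.proj_comp {i₀ : ι} {l : P →* fiberPower f ι}
    (hl : IsProperSolution α (f.comp (proj f ι i₀)) l) (i : ι) :
    IsProperSolution α f ((proj f ι i).comp l) := by
  refine ⟨hl.1.comp (proj f ι i), (proj_surjective i).comp hl.2.1, ?_⟩
  rw [← MonoidHom.comp_assoc, comp_proj_eq i i₀]
  exact hl.2.2

theorem aleph0_le_mk_properSolutions (hker : f.ker ≠ ⊥)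
    (hsolv : ∀ n : ℕ, ∃ l, IsProperSolution α (f.comp (proj f (Fin (n + 1)) 0)) l) :
    ℵ₀ ≤ #{l // IsProperSolution α f l} := by
  refine aleph0_le.mpr fun n => ?_
  obtain ⟨l, hl⟩ := hsolv n
  have hinj : Function.Injective fun i => (⟨_, hl.proj_comp i⟩ : {l // IsProperSolution α f l}) :=
    fun i j hij => proj_injective hker ((MonoidHom.cancel_right hl.2.1).mp (congrArg Subtype.val hij))
  calc (n : Cardinal) ≤ #(ULift (Fin (n + 1))) := by simp
    _ ≤ _ := mk_le_of_injective (hinj.comp ULift.down_injective)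

end ProperSolutionsOfFiberPower

theorem quasiFree_iff_split_embeddingProblems_solvable_general
    (P : Type u) [Group P] [TopologicalSpace P]
    (hrank : #{H : Subgroup P // IsOpen (H : Set P) ∧ H.Normal} = ℵ₀) :
    (∀ (G Γ : Type u) [Group G] [Group Γ] [Finite G] [Finite Γ]
      (α : P →* G) (f : Γ →* G), ContinuousToDiscrete α → Function.Surjective α →
      Function.Surjective f → (∃ s : G →* Γ, f.comp s = MonoidHom.id G) → f.ker ≠ ⊥ →
      #{l : P →* Γ // ContinuousToDiscrete l ∧ Function.Surjective l ∧ f.comp l = α} = ℵ₀) ↔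
    (∀ (G Γ : Type u) [Group G] [Group Γ] [Finite G] [Finite Γ]
      (α : P →* G) (f : Γ →* G), ContinuousToDiscrete α → Function.Surjective α →
      Function.Surjective f → (∃ s : G →* Γ, f.comp s = MonoidHom.id G) →
      ∃ l : P →* Γ, ContinuousToDiscrete l ∧ Function.Surjective l ∧ f.comp l = α) := by
  constructor
  · intro hqf G Γ _ _ _ _ α f hα hαs hfs hsplit
    by_cases hker : f.ker = ⊥
    · exact exists_isProperSolution_of_ker_eq_bot hα hαs hfs hker
    · have hne := mk_ne_zero_iff.mp ((hqf G Γ α f hα hαs hfs hsplit hker).trans_ne aleph0_ne_zero)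
      exact ⟨hne.some.1, hne.some.2⟩
  · intro hsolv G Γ _ _ _ _ α f hα hαs hfs ⟨s, hs⟩ hker
    have hP := mk_le_aleph0_iff.mp hrank.le
    refine le_antisymm (mk_properSolutions_le_aleph0 hP α f)
      (aleph0_le_mk_properSolutions hker fun n => ?_)
    exact hsolv G (fiberPower f (Fin (n + 1))) α _ hα hαs (fiberPower.comp_proj_surjective hfs 0)
      ⟨_, fiberPower.comp_proj_comp_diag_comp hs 0⟩

/-- For a profinite group `Π` of countably infinite rank, `Π` is quasi-free (of rank `ℵ₀`),
i.e. every non-trivial finite split embedding problem has exactly `ℵ₀` proper solutions, if and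
only if every finite split embedding problem for `Π` has a proper solution. -/
theorem quasiFree_iff_split_embeddingProblems_solvable
    (P : Type u) [Group P] [TopologicalSpace P] [IsTopologicalGroup P]
    [CompactSpace P] [T2Space P] [TotallyDisconnectedSpace P]
    (hrank : #{H : Subgroup P // IsOpen (H : Set P) ∧ H.Normal} = ℵ₀) :
    (∀ (G Γ : Type u) [Group G] [Group Γ] [Finite G] [Finite Γ]
      (α : P →* G) (f : Γ →* G), ContinuousToDiscrete α → Function.Surjective α →
      Function.Surjective f → (∃ s : G →* Γ, f.comp s = MonoidHom.id G) → f.ker ≠ ⊥ →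
      #{l : P →* Γ // ContinuousToDiscrete l ∧ Function.Surjective l ∧ f.comp l = α} = ℵ₀) ↔
    (∀ (G Γ : Type u) [Group G] [Group Γ] [Finite G] [Finite Γ]
      (α : P →* G) (f : Γ →* G), ContinuousToDiscrete α → Function.Surjective α →
      Function.Surjective f → (∃ s : G →* Γ, f.comp s = MonoidHom.id G) →
      ∃ l : P →* Γ, ContinuousToDiscrete l ∧ Function.Surjective l ∧ f.comp l = α) :=
  quasiFree_iff_split_embeddingProblems_solvable_general P hrank
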